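/- Let G be a finite simple graph and let H be the 1-subdivision of G. Then vi(H) ≤ (vi(G))². -/

import Mathlib

open SimpleGraph

/-- `S` is a vi(k)-set of the graph `G`. -/
def IsVISet {V : Type*} (G : SimpleGraph V) (k : ℕ) (S : Finset V) : Prop :=
  S.card ≤ k ∧
    ∀ c : (G.induce {v : V | v ∉ S}).ConnectedComponent,
      Nat.card c.supp ≤ k - S.card

/-- The vertex integrity of `G`: the minimum `k` such that `G` has a vi(k)-set. -/
noncomputable def vertexIntegrity {V : Type*} [Fintype V] (G : SimpleGraph V) : ℕ :=
  sInf {k : ℕ | ∃ S : Finset V, IsVISet G k S}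

/-- The 1-subdivision of `G`: every edge `e = {u,w}` is replaced by a path
`u - v_e - w` through a new vertex `v_e` (the original edges are removed). -/
def oneSubdivision {V : Type*} (G : SimpleGraph V) : SimpleGraph (V ⊕ G.edgeSet) where
  Adj x y :=
    match x, y with
    | Sum.inl u, Sum.inr e => u ∈ (e : Sym2 V)
    | Sum.inr e, Sum.inl u => u ∈ (e : Sym2 V)
    | Sum.inl _, Sum.inl _ => False
    | Sum.inr _, Sum.inr _ => False
  symm := by
    constructor
    rintro (u | e) (v | f) h
    · exact h.elim
    · exact h
    · exact h
    · exact h.elim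
  loopless := by
    constructor
    rintro (u | e) h
    · exact h
    · exact h

/-! Remove from the subdivision the original vertices of a vi(k)-set `S` of `G`, with `|S| = s`.
In a component of what remains, the original vertices `A` are connected in `G - S` (consecutive
ones share a subdivision vertex, i.e. an edge of `G`), so `|A| ≤ k - s`; each subdivision vertex
is an edge with both ends in `S ∪ A`, and there are at most `(s + |A|).choose 2 ≤ k.choose 2` of
those. Hence the component has at most `(k - s) + k.choose 2 ≤ k² - s` vertices. -/

namespace Set

theorem ncard_le_ncard_preimage_inl_add_ncard_preimage_inr {α β : Type*} (s : Set (α ⊕ β)) :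
    s.ncard ≤ (Sum.inl ⁻¹' s).ncard + (Sum.inr ⁻¹' s).ncard := by
  conv_lhs => rw [← image_preimage_inl_union_image_preimage_inr s]
  refine (ncard_union_le _ _).trans_eq ?_
  rw [ncard_image_of_injective _ Sum.inl_injective, ncard_image_of_injective _ Sum.inr_injective]

end Set

theorem Sym2.ncard_setOf_not_isDiag_forall_mem_le {α : Type*} {K : Set α} (hK : K.Finite) :
    {z : Sym2 α | ¬z.IsDiag ∧ ∀ a ∈ z, a ∈ K}.ncard ≤ K.ncard.choose 2 := by
  classical
  obtain ⟨K, rfl⟩ := hK.exists_finset_coe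
  have hsub :
      {z : Sym2 α | ¬z.IsDiag ∧ ∀ a ∈ z, a ∈ K} ⊆ K.offDiag.image Sym2.mk.uncurry := by
    rintro ⟨a, b⟩ ⟨hab, hK⟩
    exact Finset.mem_image.2 ⟨(a, b), Finset.mem_offDiag.2
      ⟨hK a (Sym2.mem_mk_left a b), hK b (Sym2.mem_mk_right a b), hab⟩, rfl⟩
  calc _ ≤ (K.offDiag.image Sym2.mk.uncurry : Set (Sym2 α)).ncard :=
        Set.ncard_le_ncard hsub (Finset.finite_toSet _)
    _ = (K : Set α).ncard.choose 2 := by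
      rw [Set.ncard_coe_finset, Set.ncard_coe_finset, Sym2.card_image_offDiag]

theorem SimpleGraph.Reachable.mem_of_forall_adj_mem {V : Type*} {G : SimpleGraph V}
    {P : Set V} (hP : ∀ ⦃a b⦄, G.Adj a b → a ∈ P → b ∈ P) {u v : V} (huv : G.Reachable u v)
    (hu : u ∈ P) : v ∈ P := by
  obtain ⟨p⟩ := huv
  induction p with
  | nil => exact hu
  | cons hadj _ ih => exact ih (hP hadj hu)

theorem Nat.add_choose_two_add_le_sq_sub {a s k : ℕ} (hs : s ≤ k) (ha : a ≤ k - s) :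
    a + (s + a).choose 2 ≤ k ^ 2 - s := by
  have hchoose : (s + a).choose 2 ≤ k * k - k :=
    calc (s + a).choose 2 ≤ k.choose 2 := Nat.choose_le_choose 2 (by omega)
      _ ≤ k * (k - 1) := by rw [Nat.choose_two_right]; exact Nat.div_le_self _ _
      _ = k * k - k := Nat.mul_sub_one k k
  have hk : k ≤ k * k := Nat.le_mul_self k
  rw [sq]
  omega

section oneSubdivision

variable {V : Type*} {G : SimpleGraph V} {S : Finset V}

@[simp]
theorem oneSubdivision_adj_inl_inr {u : V} {e : G.edgeSet} :
    (oneSubdivision G).Adj (.inl u) (.inr e) ↔ u ∈ (e : Sym2 V) := Iff.rfl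

@[simp]
theorem oneSubdivision_adj_inr_inl {u : V} {e : G.edgeSet} :
    (oneSubdivision G).Adj (.inr e) (.inl u) ↔ u ∈ (e : Sym2 V) := Iff.rfl

@[simp]
theorem not_oneSubdivision_adj_inl_inl {u w : V} : ¬(oneSubdivision G).Adj (.inl u) (.inl w) :=
  id

@[simp]
theorem not_oneSubdivision_adj_inr_inr {e f : G.edgeSet} :
    ¬(oneSubdivision G).Adj (.inr e) (.inr f) :=
  id

theorem reachable_induce_of_reachable_induce_oneSubdivision {u w : V} (hu : u ∉ S) (hw : w ∉ S)
    (h : ((oneSubdivision G).induce {x | x ∉ S.map .inl}).Reachable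
      ⟨.inl u, by simpa using hu⟩ ⟨.inl w, by simpa using hw⟩) :
    (G.induce {v | v ∉ S}).Reachable ⟨u, hu⟩ ⟨w, hw⟩ := by
  -- Invariant along the walk: every original vertex outside `S` equal or adjacent to the
  -- current vertex is reachable from `u` in `G - S`.
  let P : Set {x | x ∉ S.map .inl} := {y | ∀ x (hx : x ∉ S),
    (y.1 = .inl x ∨ (oneSubdivision G).Adj (.inl x) y.1) →
      (G.induce {v | v ∉ S}).Reachable ⟨u, hu⟩ ⟨x, hx⟩}
  refine h.mem_of_forall_adj_mem (P := P) ?_ ?_ w hw (.inl rfl)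
  · rintro ⟨a | e, ha⟩ ⟨b | f, hb⟩ hab hPa x hx hxb <;>
      simp only [comap_adj, Function.Embedding.subtype_apply, oneSubdivision_adj_inl_inr,
        oneSubdivision_adj_inr_inl, not_oneSubdivision_adj_inl_inl,
        not_oneSubdivision_adj_inr_inr, reduceCtorEq, Sum.inl.injEq, false_or, or_false] at hab hxb
    · have ha' : a ∉ S := by simpa using ha
      have hua := hPa a ha' (.inl rfl)
      rcases eq_or_ne a x with rfl | hax
      · exact hua
      · have hadj : (G.induce {v | v ∉ S}).Adj ⟨a, ha'⟩ ⟨x, hx⟩ :=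
          G.adj_of_mem_incidenceSet hax ⟨f.2, hab⟩ ⟨f.2, hxb⟩
        exact hua.trans hadj.reachable
    · subst hxb
      exact hPa b hx (.inr hab)
  · rintro x hx (hxu | hadj)
    · obtain rfl : u = x := Sum.inl_injective hxu
      rfl
    · exact (not_oneSubdivision_adj_inl_inl hadj).elim

theorem IsVISet.ncard_preimage_inl_supp_le [Finite V] {k : ℕ} (hS : IsVISet G k S)
    (c : ((oneSubdivision G).induce {x | x ∉ S.map .inl}).ConnectedComponent) :
    (Sum.inl ⁻¹' (Subtype.val '' c.supp)).ncard ≤ k - S.card := by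
  rcases (Sum.inl ⁻¹' (Subtype.val '' c.supp)).eq_empty_or_nonempty with
    hA | ⟨v, ⟨_, hvT⟩, hvc, rfl⟩
  · rw [hA, Set.ncard_empty]
    exact Nat.zero_le _
  have hv : v ∉ S := by simpa using hvT
  let D := (G.induce {v | v ∉ S}).connectedComponentMk ⟨v, hv⟩
  have hsub : Sum.inl ⁻¹' (Subtype.val '' c.supp) ⊆ Subtype.val '' D.supp := by
    rintro w ⟨⟨_, hwT⟩, hwc, hw⟩
    subst hw
    have hw : w ∉ S := by simpa using hwT
    exact ⟨⟨w, hw⟩, ConnectedComponent.eq.2 <|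
      reachable_induce_of_reachable_induce_oneSubdivision hw hv (c.reachable_of_mem_supp hwc hvc),
      rfl⟩
  calc _ ≤ (Subtype.val '' D.supp).ncard := Set.ncard_le_ncard hsub (Set.toFinite _)
    _ = Nat.card D.supp := by
      rw [Set.ncard_image_of_injective _ Subtype.val_injective, Nat.card_coe_set_eq]
    _ ≤ k - S.card := hS.2 D

theorem ncard_preimage_inr_supp_le [Finite V]
    (c : ((oneSubdivision G).induce {x | x ∉ S.map .inl}).ConnectedComponent) :
    (Sum.inr ⁻¹' (Subtype.val '' c.supp)).ncard ≤
      (S.card + (Sum.inl ⁻¹' (Subtype.val '' c.supp)).ncard).choose 2 := by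
  set A := Sum.inl ⁻¹' (Subtype.val '' c.supp)
  have hends : ∀ e ∈ Sum.inr ⁻¹' (Subtype.val '' c.supp), ∀ u ∈ (e : Sym2 V), u ∈ ↑S ∪ A := by
    rintro e ⟨⟨_, heT⟩, hec, he⟩ u hu
    subst he
    by_cases huS : u ∈ S
    · exact .inl huS
    · exact .inr ⟨⟨.inl u, by simpa using huS⟩, c.mem_supp_of_adj_mem_supp hec hu, rfl⟩
  calc _ = (Subtype.val '' (Sum.inr ⁻¹' (Subtype.val '' c.supp))).ncard :=
        (Set.ncard_image_of_injective _ Subtype.val_injective).symm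
    _ ≤ {z : Sym2 V | ¬z.IsDiag ∧ ∀ u ∈ z, u ∈ ↑S ∪ A}.ncard := by
      refine Set.ncard_le_ncard ?_ (Set.toFinite _)
      rintro _ ⟨e, he, rfl⟩
      exact ⟨G.not_isDiag_of_mem_edgeSet e.2, hends e he⟩
    _ ≤ (↑S ∪ A).ncard.choose 2 := Sym2.ncard_setOf_not_isDiag_forall_mem_le (Set.toFinite _)
    _ ≤ (S.card + A.ncard).choose 2 := by
      gcongr
      exact (Set.ncard_union_le _ _).trans_eq (by rw [Set.ncard_coe_finset])

theorem IsVISet.oneSubdivision [Finite V] {k : ℕ} (hS : IsVISet G k S) :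
    IsVISet (oneSubdivision G) (k ^ 2) (S.map .inl) := by
  refine ⟨(S.card_map _).trans_le (hS.1.trans (Nat.le_self_pow two_ne_zero k)), fun c => ?_⟩
  rw [Finset.card_map]
  set A := Sum.inl ⁻¹' (Subtype.val '' c.supp)
  calc Nat.card c.supp = (Subtype.val '' c.supp).ncard := by
        rw [Set.ncard_image_of_injective _ Subtype.val_injective, Nat.card_coe_set_eq]
    _ ≤ A.ncard + (Sum.inr ⁻¹' (Subtype.val '' c.supp)).ncard :=
      Set.ncard_le_ncard_preimage_inl_add_ncard_preimage_inr _
    _ ≤ A.ncard + (S.card + A.ncard).choose 2 := by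
      gcongr
      exact ncard_preimage_inr_supp_le c
    _ ≤ k ^ 2 - S.card :=
      Nat.add_choose_two_add_le_sq_sub hS.1 (hS.ncard_preimage_inl_supp_le c)

theorem IsVISet.vertexIntegrity_le [Fintype V] {k : ℕ} (hS : IsVISet G k S) :
    vertexIntegrity G ≤ k :=
  Nat.sInf_le ⟨S, hS⟩

theorem isVISet_univ [Fintype V] (G : SimpleGraph V) :
    IsVISet G (Fintype.card V) Finset.univ := by
  refine ⟨Finset.card_univ.le, fun c => ?_⟩
  obtain ⟨⟨v, hv⟩, -⟩ := c.exists_rep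
  exact absurd (Finset.mem_univ v) hv

theorem exists_isVISet_vertexIntegrity [Fintype V] (G : SimpleGraph V) :
    ∃ S : Finset V, IsVISet G (vertexIntegrity G) S :=
  Nat.sInf_mem (s := {k | ∃ S, IsVISet G k S}) ⟨_, _, isVISet_univ G⟩

end oneSubdivision

theorem stmt_5_general {V : Type*} [Fintype V] (G : SimpleGraph V)
    [DecidableRel G.Adj] :
    vertexIntegrity (oneSubdivision G) ≤ (vertexIntegrity G) ^ 2 := by
  obtain ⟨S, hS⟩ := exists_isVISet_vertexIntegrity G
  exact hS.oneSubdivision.vertexIntegrity_le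

/-- The vertex integrity of the 1-subdivision of a finite simple graph `G` is
at most the square of the vertex integrity of `G`. -/
theorem stmt_5 {V : Type*} [Fintype V] [DecidableEq V] (G : SimpleGraph V)
    [DecidableRel G.Adj] :
    vertexIntegrity (oneSubdivision G) ≤ (vertexIntegrity G) ^ 2 :=
  stmt_5_general G
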